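/- Let F be the event that a path fails, where the path fails iff S_k ⊆ W for some k, with W the random set of failed elements (independent failures). Let Z = Σ_{k=1}^m ∏_{u∈S_k} p(u) and define E[I] as in the importance-sampling scheme where I = 1 iff a node chosen with probability proportional to ∏_{u∈S_k} p(u) is the first failed node in the sampled configuration. Then P(F) = E[I] · Z. -/
import Mathlib


open scoped Classical

/-- Probability of an event on failure configurations, when element `u` of `U`
fails independently with probability `p u`. -/
noncomputable def failPr {U : Type*} [Fintype U] (p : U → ℝ) (E : Finset U → Prop) : ℝ :=
  ∑ W : Finset U, if E W then (∏ u ∈ W, p u) * ∏ u ∈ Wᶜ, (1 - p u) else 0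

theorem stmt_12 {U : Type*} [Fintype U] (m : ℕ) (hm : 0 < m)
    (S : Fin m → Finset U) (p : U → ℝ) (hp : ∀ u, p u ∈ Set.Ioo (0:ℝ) 1)
    (Z : ℝ) (hZ : Z = ∑ k, ∏ u ∈ S k, p u)
    (EI : ℝ)
    (hEI : EI = ∑ k : Fin m, ∑ W : Finset U,
      if S k ⊆ W ∧ ∀ k' < k, ¬ S k' ⊆ W then
        ((∏ u ∈ S k, p u) / Z) * (∏ u ∈ W \ S k, p u) * ∏ u ∈ Wᶜ, (1 - p u)
      else 0) :
    failPr p (fun W => ∃ k, S k ⊆ W) = EI * Z := by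
  have hZpos : 0 < Z := by
    rw [hZ]
    apply Finset.sum_pos
    · intro k _
      exact Finset.prod_pos (fun u _ => (hp u).1)
    · exact ⟨⟨0, hm⟩, Finset.mem_univ _⟩
  have hZne : Z ≠ 0 := ne_of_gt hZpos
  subst hEI
  rw [Finset.sum_mul]
  simp only [Finset.sum_mul, ite_mul, zero_mul]
  rw [Finset.sum_comm]
  unfold failPr
  apply Finset.sum_congr rfl
  intro W _
  by_cases h : ∃ k, S k ⊆ W
  · simp only [h, if_true]
    obtain ⟨k1, hk1⟩ := h
    set T := Finset.univ.filter (fun k => S k ⊆ W) with hT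
    have hTne : T.Nonempty := ⟨k1, by simp [hT, hk1]⟩
    set k0 := T.min' hTne with hk0
    have hk0mem : S k0 ⊆ W := by
      have := T.min'_mem hTne; simpa [hT] using this
    rw [Finset.sum_eq_single k0]
    · rw [if_pos]
      · rw [← Finset.prod_sdiff hk0mem]
        rw [div_mul_eq_mul_div, div_mul_eq_mul_div, div_mul_cancel₀ _ hZne]
        ring
      · refine ⟨hk0mem, fun k' hk' hc => ?_⟩
        have : k0 ≤ k' := T.min'_le k' (by simp [hT, hc])
        exact absurd hk' (not_lt.mpr this)
    · intro k _ hk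
      rw [if_neg]
      rintro ⟨hkW, hfirst⟩
      have h1 : k0 ≤ k := T.min'_le k (by simp [hT, hkW])
      exact hfirst k0 (h1.lt_of_ne (Ne.symm hk)) hk0mem
    · intro hk; exact absurd (Finset.mem_univ k0) hk
  · simp only [h, if_false]
    symm
    apply Finset.sum_eq_zero
    intro k _
    rw [if_neg]
    exact fun hc => h ⟨k, hc.1⟩
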